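/- Let d₁, d₂ be the unique antiderivations of 𝔄(g) with d₁ψ = −B, d₁φ = β, d₁(other generators) = 0 and d₂B = −[F,ψ], d₂β = [F,φ], d₂(other generators) = 0. Then the restriction of the differential d to the base ℬ(g) coincides with the restriction of d₁ + d₂. -/

import Mathlib

open scoped TensorProduct

noncomputable section

/-- The graded bracket on `g ⊗ Ω` induced by `[X⊗P, Y⊗Q] = ⁅X,Y⁆ ⊗ (P*Q)`. -/
def gaBracket (g : Type) [LieRing g] [LieAlgebra ℂ g] (Ω : Type) [Ring Ω] [Algebra ℂ Ω] :
    (g ⊗[ℂ] Ω) →ₗ[ℂ] (g ⊗[ℂ] Ω) →ₗ[ℂ] (g ⊗[ℂ] Ω) :=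
  TensorProduct.map₂
    (LinearMap.mk₂ ℂ (fun X Y => ⁅X, Y⁆)
      (by intros; simp [add_lie]) (by intros; simp [smul_lie])
      (by intros; simp [lie_add]) (by intros; simp [lie_smul]))
    (LinearMap.mul ℂ Ω)

/-- The submodule of `g ⊗ Ω` of `g`-valued elements with components in a submodule `S` of `Ω`. -/
def gvSub (g : Type) [LieRing g] [LieAlgebra ℂ g] {Ω : Type} [AddCommGroup Ω] [Module ℂ Ω]
    (S : Submodule ℂ Ω) : Submodule ℂ (g ⊗[ℂ] Ω) :=
  LinearMap.range (LinearMap.lTensor g S.subtype)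

/-- A bigraded-commutative algebra structure on `Ω` given by bidegree pieces `gr k l`. -/
def IsBigradedCommAlg (Ω : Type) [Ring Ω] [Algebra ℂ Ω] (gr : ℕ → ℕ → Submodule ℂ Ω) : Prop :=
  (1 : Ω) ∈ gr 0 0 ∧
  (∀ k l m n, ∀ a ∈ gr k l, ∀ b ∈ gr m n, a * b ∈ gr (k + m) (l + n)) ∧
  (∀ k l m n, ∀ a ∈ gr k l, ∀ b ∈ gr m n,
      a * b = ((-1 : ℂ)) ^ ((k + l) * (m + n)) • (b * a)) ∧
  DirectSum.IsInternal (fun p : ℕ × ℕ => gr p.1 p.2)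

/-- An antiderivation with respect to the total degree of a bigrading. -/
def IsAntideriv {Ω : Type} [Ring Ω] [Algebra ℂ Ω] (gr : ℕ → ℕ → Submodule ℂ Ω)
    (R : Ω →ₗ[ℂ] Ω) : Prop :=
  ∀ k l, ∀ a ∈ gr k l, ∀ b, R (a * b) = R a * b + ((-1 : ℂ)) ^ (k + l) • (a * R b)

/-- The bigraded Weil algebra data: a bigraded-commutative differential algebra with
differentials `d`, `δ` of bidegrees `(1,0)`, `(0,1)` and `g`-valued generators
`A, α, F, φ, ψ, ξ, B, β` satisfying the structure equations of Lemma 1.1. -/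
structure BigradedWeil (g : Type) [LieRing g] [LieAlgebra ℂ g]
    (𝔄 : Type) [Ring 𝔄] [Algebra ℂ 𝔄] where
  gr : ℕ → ℕ → Submodule ℂ 𝔄
  graded : IsBigradedCommAlg 𝔄 gr
  d : 𝔄 →ₗ[ℂ] 𝔄
  δ : 𝔄 →ₗ[ℂ] 𝔄
  d_antideriv : IsAntideriv gr d
  δ_antideriv : IsAntideriv gr δ
  d_gr : ∀ k l, ∀ x ∈ gr k l, d x ∈ gr (k + 1) l
  δ_gr : ∀ k l, ∀ x ∈ gr k l, δ x ∈ gr k (l + 1)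
  d_sq : ∀ x, d (d x) = 0
  δ_sq : ∀ x, δ (δ x) = 0
  d_δ : ∀ x, d (δ x) + δ (d x) = 0
  A : g ⊗[ℂ] 𝔄
  α : g ⊗[ℂ] 𝔄
  F : g ⊗[ℂ] 𝔄
  φ : g ⊗[ℂ] 𝔄
  ψ : g ⊗[ℂ] 𝔄
  ξ : g ⊗[ℂ] 𝔄
  B : g ⊗[ℂ] 𝔄
  β : g ⊗[ℂ] 𝔄
  A_mem : A ∈ gvSub g (gr 1 0)
  α_mem : α ∈ gvSub g (gr 0 1)
  F_mem : F ∈ gvSub g (gr 2 0)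
  φ_mem : φ ∈ gvSub g (gr 0 2)
  ψ_mem : ψ ∈ gvSub g (gr 1 1)
  ξ_mem : ξ ∈ gvSub g (gr 1 1)
  B_mem : B ∈ gvSub g (gr 2 1)
  β_mem : β ∈ gvSub g (gr 1 2)
  eqF : F = LinearMap.lTensor g d A + (2⁻¹ : ℂ) • gaBracket g 𝔄 A A
  eqφ : φ = LinearMap.lTensor g δ α + (2⁻¹ : ℂ) • gaBracket g 𝔄 α α
  eqψ : ψ = LinearMap.lTensor g δ A + LinearMap.lTensor g d α + gaBracket g 𝔄 A α
  eqξ : ξ = LinearMap.lTensor g δ A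
  eqB : B = LinearMap.lTensor g δ F + gaBracket g 𝔄 α F
  eqβ : β = LinearMap.lTensor g d φ + gaBracket g 𝔄 A φ

/-- The universal property expressing that the bigraded-commutative algebra `𝔄` is free on
the given list of `g`-valued generators with the given bidegrees. -/
def FreeOn (g : Type) [LieRing g] [LieAlgebra ℂ g] {𝔄 : Type} [Ring 𝔄] [Algebra ℂ 𝔄]
    (gr : ℕ → ℕ → Submodule ℂ 𝔄) {m : ℕ} (gens : Fin m → (ℕ × ℕ) × (g ⊗[ℂ] 𝔄)) : Prop :=
  ∀ (Ω : Type) [Ring Ω] [Algebra ℂ Ω] (grΩ : ℕ → ℕ → Submodule ℂ Ω),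
    IsBigradedCommAlg Ω grΩ →
    ∀ v : Fin m → g ⊗[ℂ] Ω,
      (∀ j, v j ∈ gvSub g (grΩ (gens j).1.1 (gens j).1.2)) →
      ∃! h : 𝔄 →ₐ[ℂ] Ω,
        (∀ k l, ∀ x ∈ gr k l, h x ∈ grΩ k l) ∧
        ∀ j, LinearMap.lTensor g h.toLinearMap (gens j).2 = v j

/-- The list of generators of the bigraded Weil algebra with their bidegrees. -/
def BigradedWeil.gens {g : Type} [LieRing g] [LieAlgebra ℂ g] {𝔄 : Type} [Ring 𝔄]
    [Algebra ℂ 𝔄] (W : BigradedWeil g 𝔄) : Fin 8 → (ℕ × ℕ) × (g ⊗[ℂ] 𝔄) :=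
  ![((1, 0), W.A), ((0, 1), W.α), ((2, 0), W.F), ((0, 2), W.φ),
    ((1, 1), W.ψ), ((1, 1), W.ξ), ((2, 1), W.B), ((1, 2), W.β)]

/-- The `i`-th component in `𝔄` of a `g`-valued element of `g ⊗ 𝔄`, w.r.t. a basis of `g`. -/
def coordEv {g : Type} [LieRing g] [LieAlgebra ℂ g] {ι : Type} (b : Module.Basis ι ℂ g)
    {𝔄 : Type} [Ring 𝔄] [Algebra ℂ 𝔄] (i : ι) : g ⊗[ℂ] 𝔄 →ₗ[ℂ] 𝔄 :=
  (TensorProduct.lid ℂ 𝔄).toLinearMap ∘ₗ LinearMap.rTensor 𝔄 (b.coord i)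

/-- Evaluation of a multilinear form `I` on `g` on `g`-valued elements `Z j ∈ g ⊗ 𝔄`,
multiplying the `𝔄`-components in order. -/
def multiEval {g : Type} [LieRing g] [LieAlgebra ℂ g] {ι : Type} [Fintype ι]
    (b : Module.Basis ι ℂ g) {𝔄 : Type} [Ring 𝔄] [Algebra ℂ 𝔄] {n : ℕ}
    (I : MultilinearMap ℂ (fun _ : Fin n => g) ℂ) (Z : Fin n → g ⊗[ℂ] 𝔄) : 𝔄 :=
  ∑ iv : Fin n → ι, I (fun j => b (iv j)) • (List.ofFn fun j => coordEv b (iv j) (Z j)).prod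

/-- `ad`-invariance of a multilinear form on `g`. -/
def IsInvForm {g : Type} [LieRing g] [LieAlgebra ℂ g] {n : ℕ}
    (I : MultilinearMap ℂ (fun _ : Fin n => g) ℂ) : Prop :=
  ∀ (X : g) (v : Fin n → g), ∑ j, I (Function.update v j ⁅v j, X⁆) = 0

/-- Symmetry of a multilinear form on `g`. -/
def IsSymForm {g : Type} [LieRing g] [LieAlgebra ℂ g] {n : ℕ}
    (I : MultilinearMap ℂ (fun _ : Fin n => g) ℂ) : Prop :=
  ∀ (σ : Equiv.Perm (Fin n)) (v : Fin n → g), I (fun j => v (σ j)) = I v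

/-- The five `g`-valued elements `F, ψ, φ, B, β` of the bigraded Weil algebra. -/
def BigradedWeil.genOf {g : Type} [LieRing g] [LieAlgebra ℂ g] {𝔄 : Type} [Ring 𝔄]
    [Algebra ℂ 𝔄] (W : BigradedWeil g 𝔄) : Fin 5 → g ⊗[ℂ] 𝔄 :=
  ![W.F, W.ψ, W.φ, W.B, W.β]

/-- The base `ℬ(g) ⊆ 𝔄(g)`: the span of the invariant "polynomials" `𝓘(F,ψ,φ,B,β)`. -/
def baseB {g : Type} [LieRing g] [LieAlgebra ℂ g] {ι : Type} [Fintype ι] (b : Module.Basis ι ℂ g)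
    {𝔄 : Type} [Ring 𝔄] [Algebra ℂ 𝔄] (W : BigradedWeil g 𝔄) : Submodule ℂ 𝔄 :=
  Submodule.span ℂ { x | ∃ (n : ℕ) (I : MultilinearMap ℂ (fun _ : Fin n => g) ℂ)
      (c : Fin n → Fin 5), IsInvForm I ∧ x = multiEval b I (fun j => W.genOf (c j)) }

end

/-! The difference `R = d - d₁ - d₂` is again an antiderivation. Applying `d` to the structure
equations (using `d² = 0`, `dδ = -δd`, the graded Leibniz rule for the bracket and graded Jacobi)
gives the Bianchi identities `dF = -[A,F]`, `dψ = -B - [A,ψ]`, `dφ = β - [A,φ]`,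
`dB = -[A,B] - [F,ψ]`, `dβ = [F,φ] - [A,β]`, so `R` acts on each of `F, ψ, φ, B, β` as `-ad A`.
An antiderivation acting on the arguments as `-ad A`, with `A` of total degree one, kills every
invariant polynomial: moving the odd coefficients `Aᵖ` to the front cancels the Koszul signs, and
`R 𝓘(Z₁,…,Zₙ) = -∑ₚ Aᵖ ∑ⱼ 𝓘(Z₁,…,[Eₚ,Zⱼ],…,Zₙ)` vanishes by `ad`-invariance of `𝓘`. -/

open Function LinearMap

section Bracket

variable {g : Type} [LieRing g] [LieAlgebra ℂ g]
variable {𝔄 : Type} [Ring 𝔄] [Algebra ℂ 𝔄] {gr : ℕ → ℕ → Submodule ℂ 𝔄}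

theorem tmul_mem_gvSub {Ω : Type} [AddCommGroup Ω] [Module ℂ Ω] {S : Submodule ℂ Ω}
    (x : g) {s : Ω} (hs : s ∈ S) : x ⊗ₜ[ℂ] s ∈ gvSub g S :=
  ⟨x ⊗ₜ ⟨s, hs⟩, rfl⟩

@[elab_as_elim]
theorem gvSub_induction {Ω : Type} [AddCommGroup Ω] [Module ℂ Ω] {S : Submodule ℂ Ω}
    {P : ∀ Z : g ⊗[ℂ] Ω, Z ∈ gvSub g S → Prop} (zero : P 0 (zero_mem _))
    (add : ∀ Z V hZ hV, P Z hZ → P V hV → P (Z + V) (add_mem hZ hV))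
    (tmul : ∀ x s (hs : s ∈ S), P (x ⊗ₜ s) (tmul_mem_gvSub x hs))
    {Z : g ⊗[ℂ] Ω} (hZ : Z ∈ gvSub g S) : P Z hZ := by
  obtain ⟨z, rfl⟩ := hZ
  induction z using TensorProduct.induction_on with
  | zero => simpa using zero
  | tmul x s => exact tmul x s s.2
  | add u v hu hv => simpa using add _ _ _ _ hu hv

theorem lTensor_mem_gvSub {Ω Ω' : Type} [AddCommGroup Ω] [Module ℂ Ω] [AddCommGroup Ω']
    [Module ℂ Ω'] {S : Submodule ℂ Ω} {T : Submodule ℂ Ω'} (f : Ω →ₗ[ℂ] Ω')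
    (hf : ∀ s ∈ S, f s ∈ T) {Z : g ⊗[ℂ] Ω} (hZ : Z ∈ gvSub g S) :
    lTensor g f Z ∈ gvSub g T := by
  induction hZ using gvSub_induction with
  | zero => simp
  | add Z V _ _ hZ hV => rw [map_add]; exact add_mem hZ hV
  | tmul x s hs => exact tmul_mem_gvSub x (hf s hs)

theorem gaBracket_tmul (x y : g) (a c : 𝔄) :
    gaBracket g 𝔄 (x ⊗ₜ a) (y ⊗ₜ c) = ⁅x, y⁆ ⊗ₜ (a * c) := by
  simp [gaBracket]

theorem gaBracket_mem_gvSub (hgr : IsBigradedCommAlg 𝔄 gr) {k l m n : ℕ} {Z V : g ⊗[ℂ] 𝔄}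
    (hZ : Z ∈ gvSub g (gr k l)) (hV : V ∈ gvSub g (gr m n)) :
    gaBracket g 𝔄 Z V ∈ gvSub g (gr (k + m) (l + n)) := by
  induction hZ using gvSub_induction with
  | zero => simp
  | add Z Z' _ _ hZ hZ' => rw [map_add, LinearMap.add_apply]; exact add_mem hZ hZ'
  | tmul x s hs =>
    induction hV using gvSub_induction with
    | zero => simp
    | add V V' _ _ hV hV' => rw [map_add]; exact add_mem hV hV'
    | tmul y t ht =>
      rw [gaBracket_tmul]
      exact tmul_mem_gvSub _ (hgr.2.1 k l m n s hs t ht)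

theorem gaBracket_comm (hgr : IsBigradedCommAlg 𝔄 gr) {k l m n : ℕ} {Z V : g ⊗[ℂ] 𝔄}
    (hZ : Z ∈ gvSub g (gr k l)) (hV : V ∈ gvSub g (gr m n)) :
    gaBracket g 𝔄 Z V = (-1 : ℂ) ^ ((k + l) * (m + n) + 1) • gaBracket g 𝔄 V Z := by
  induction hZ using gvSub_induction with
  | zero => simp
  | add Z Z' _ _ hZ hZ' => simp only [map_add, LinearMap.add_apply, hZ, hZ', smul_add]
  | tmul x s hs =>
    induction hV using gvSub_induction with
    | zero => simp
    | add V V' _ _ hV hV' => simp only [map_add, LinearMap.add_apply, hV, hV', smul_add]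
    | tmul y t ht =>
      rw [gaBracket_tmul, gaBracket_tmul, hgr.2.2.1 k l m n s hs t ht, ← lie_skew,
        TensorProduct.tmul_smul, TensorProduct.neg_tmul, pow_succ, mul_smul, neg_one_smul,
        smul_neg]

theorem IsAntideriv.lTensor_gaBracket {R : 𝔄 →ₗ[ℂ] 𝔄} (hR : IsAntideriv gr R) {k l : ℕ}
    {Z : g ⊗[ℂ] 𝔄} (hZ : Z ∈ gvSub g (gr k l)) (V : g ⊗[ℂ] 𝔄) :
    lTensor g R (gaBracket g 𝔄 Z V) =
      gaBracket g 𝔄 (lTensor g R Z) V + (-1 : ℂ) ^ (k + l) • gaBracket g 𝔄 Z (lTensor g R V) := by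
  induction hZ using gvSub_induction with
  | zero => simp
  | add Z Z' _ _ hZ hZ' => simp only [map_add, LinearMap.add_apply, hZ, hZ', smul_add]; abel
  | tmul x s hs =>
    induction V using TensorProduct.induction_on with
    | zero => simp
    | add V V' hV hV' => simp only [map_add, hV, hV', smul_add]; abel
    | tmul y t =>
      rw [lTensor_tmul, lTensor_tmul, gaBracket_tmul, gaBracket_tmul, gaBracket_tmul,
        lTensor_tmul, hR k l s hs t, TensorProduct.tmul_add, TensorProduct.tmul_smul]

theorem gaBracket_jacobi (hgr : IsBigradedCommAlg 𝔄 gr) {k l m n : ℕ} {Z V : g ⊗[ℂ] 𝔄}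
    (hZ : Z ∈ gvSub g (gr k l)) (hV : V ∈ gvSub g (gr m n)) (U : g ⊗[ℂ] 𝔄) :
    gaBracket g 𝔄 Z (gaBracket g 𝔄 V U) =
      gaBracket g 𝔄 (gaBracket g 𝔄 Z V) U +
        (-1 : ℂ) ^ ((k + l) * (m + n)) • gaBracket g 𝔄 V (gaBracket g 𝔄 Z U) := by
  induction hZ using gvSub_induction with
  | zero => simp
  | add Z Z' _ _ hZ hZ' => simp only [map_add, LinearMap.add_apply, hZ, hZ', smul_add]; abel
  | tmul x s hs =>
    induction hV using gvSub_induction with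
    | zero => simp
    | add V V' _ _ hV hV' => simp only [map_add, LinearMap.add_apply, hV, hV', smul_add]; abel
    | tmul y t ht =>
      induction U using TensorProduct.induction_on with
      | zero => simp
      | add U U' hU hU' => simp only [map_add, hU, hU', smul_add]; abel
      | tmul z u =>
        rw [gaBracket_tmul, gaBracket_tmul, gaBracket_tmul, gaBracket_tmul, gaBracket_tmul,
          gaBracket_tmul, ← TensorProduct.tmul_smul, ← smul_mul_assoc, ← mul_assoc _ s,
          smul_mul_assoc, ← hgr.2.2.1 k l m n s hs t ht, ← mul_assoc, ← TensorProduct.add_tmul,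
          leibniz_lie]

end Bracket

section OddBracket

variable {g : Type} [LieRing g] [LieAlgebra ℂ g]
variable {𝔄 : Type} [Ring 𝔄] [Algebra ℂ 𝔄] {gr : ℕ → ℕ → Submodule ℂ 𝔄}

theorem gaBracket_self_gaBracket (hgr : IsBigradedCommAlg 𝔄 gr) {Z : g ⊗[ℂ] 𝔄}
    (hZ : Z ∈ gvSub g (gr 1 0)) (V : g ⊗[ℂ] 𝔄) :
    gaBracket g 𝔄 Z (gaBracket g 𝔄 Z V) = (2⁻¹ : ℂ) • gaBracket g 𝔄 (gaBracket g 𝔄 Z Z) V := by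
  linear_combination (norm := module) (2⁻¹ : ℂ) • gaBracket_jacobi hgr hZ hZ V

theorem gaBracket_gaBracket_self_self (hgr : IsBigradedCommAlg 𝔄 gr) {Z : g ⊗[ℂ] 𝔄}
    (hZ : Z ∈ gvSub g (gr 1 0)) : gaBracket g 𝔄 (gaBracket g 𝔄 Z Z) Z = 0 := by
  have comm := gaBracket_comm hgr (gaBracket_mem_gvSub hgr hZ hZ) hZ
  have h3 : (3 : ℂ) • gaBracket g 𝔄 Z (gaBracket g 𝔄 Z Z) = 0 := by
    linear_combination (norm := module) gaBracket_jacobi hgr hZ hZ Z + comm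
  rw [comm, (smul_eq_zero.mp h3).resolve_left three_ne_zero, smul_zero]

theorem gaBracket_gaBracket_self_right (hgr : IsBigradedCommAlg 𝔄 gr) {Z Y : g ⊗[ℂ] 𝔄}
    (hZ : Z ∈ gvSub g (gr 1 0)) (hY : Y ∈ gvSub g (gr 0 1)) :
    gaBracket g 𝔄 (gaBracket g 𝔄 Z Y) Z = -((2⁻¹ : ℂ) • gaBracket g 𝔄 (gaBracket g 𝔄 Z Z) Y) := by
  have comm_YZ : gaBracket g 𝔄 Z (gaBracket g 𝔄 Y Z) = gaBracket g 𝔄 Z (gaBracket g 𝔄 Z Y) := by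
    rw [gaBracket_comm hgr hY hZ]; norm_num
  linear_combination (norm := module) (2⁻¹ : ℂ) • gaBracket_jacobi hgr hZ hZ Y -
    gaBracket_jacobi hgr hZ hY Z + comm_YZ + gaBracket_comm hgr hY (gaBracket_mem_gvSub hgr hZ hZ)

end OddBracket

section Coordinates

variable {g : Type} [LieRing g] [LieAlgebra ℂ g] {ι : Type} (b : Module.Basis ι ℂ g)
variable {𝔄 : Type} [Ring 𝔄] [Algebra ℂ 𝔄]

theorem coordEv_tmul (i : ι) (x : g) (a : 𝔄) : coordEv b i (x ⊗ₜ[ℂ] a) = b.coord i x • a := by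
  simp [coordEv]

theorem coordEv_lTensor (R : 𝔄 →ₗ[ℂ] 𝔄) (i : ι) (Z : g ⊗[ℂ] 𝔄) :
    coordEv b i (lTensor g R Z) = R (coordEv b i Z) := by
  induction Z using TensorProduct.induction_on with
  | zero => simp
  | tmul x a => rw [lTensor_tmul, coordEv_tmul, coordEv_tmul, map_smul]
  | add Z V hZ hV => simp only [map_add, hZ, hV]

theorem coordEv_mem_of_mem_gvSub {S : Submodule ℂ 𝔄} {Z : g ⊗[ℂ] 𝔄} (hZ : Z ∈ gvSub g S)
    (i : ι) : coordEv b i Z ∈ S := by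
  induction hZ using gvSub_induction with
  | zero => simp
  | add Z V _ _ hZ hV => rw [map_add]; exact add_mem hZ hV
  | tmul x s hs => rw [coordEv_tmul]; exact S.smul_mem _ hs

variable [Fintype ι]

theorem sum_tmul_coordEv (Z : g ⊗[ℂ] 𝔄) : ∑ i, b i ⊗ₜ[ℂ] coordEv b i Z = Z := by
  induction Z using TensorProduct.induction_on with
  | zero => simp
  | tmul x a =>
    simp_rw [coordEv_tmul, TensorProduct.tmul_smul, TensorProduct.smul_tmul',
      ← TensorProduct.sum_tmul, Module.Basis.coord_apply, Module.Basis.sum_repr]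
  | add Z V hZ hV => simp only [map_add, TensorProduct.tmul_add, Finset.sum_add_distrib, hZ, hV]

theorem coordEv_gaBracket (i : ι) (Z V : g ⊗[ℂ] 𝔄) :
    coordEv b i (gaBracket g 𝔄 Z V) =
      ∑ p, ∑ q, b.coord i ⁅b p, b q⁆ • (coordEv b p Z * coordEv b q V) := by
  conv_lhs => rw [← sum_tmul_coordEv b Z, ← sum_tmul_coordEv b V]
  simp only [map_sum, LinearMap.sum_apply, gaBracket_tmul, coordEv_tmul]
  exact Finset.sum_comm

end Coordinates

section OrderedProducts

variable {𝔄 : Type} [Ring 𝔄]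

def prodOfFn {n : ℕ} (a : Fin n → 𝔄) : 𝔄 := (List.ofFn a).prod

theorem prodOfFn_succ {n : ℕ} (a : Fin (n + 1) → 𝔄) : prodOfFn a = a 0 * prodOfFn (Fin.tail a) := by
  rw [prodOfFn, List.ofFn_succ, List.prod_cons]; rfl

theorem exists_prodOfFn_update {n : ℕ} (a : Fin n → 𝔄) (j : Fin n) :
    ∃ u v : 𝔄, ∀ x, prodOfFn (update a j x) = u * x * v := by
  induction n with
  | zero => exact j.elim0
  | succ n ih =>
    cases j using Fin.cases with
    | zero => exact ⟨1, prodOfFn (Fin.tail a), fun x => by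
        rw [prodOfFn_succ, update_self, Fin.tail_update_zero, one_mul]⟩
    | succ j =>
      obtain ⟨u, v, huv⟩ := ih (Fin.tail a) j
      exact ⟨a 0 * u, v, fun x => by
        rw [prodOfFn_succ, update_of_ne (Fin.succ_ne_zero j).symm, Fin.tail_update_succ, huv,
          mul_assoc, mul_assoc, mul_assoc]⟩

variable [Algebra ℂ 𝔄]

@[simps]
def prodOfFnUpdate {n : ℕ} (a : Fin n → 𝔄) (j : Fin n) : 𝔄 →ₗ[ℂ] 𝔄 where
  toFun x := prodOfFn (update a j x)
  map_add' x y := by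
    obtain ⟨u, v, huv⟩ := exists_prodOfFn_update a j
    simp only [huv, mul_add, add_mul]
  map_smul' c x := by
    obtain ⟨u, v, huv⟩ := exists_prodOfFn_update a j
    simp only [huv, mul_smul_comm, smul_mul_assoc, RingHom.id_apply]

def prefixDegree {n : ℕ} (deg : Fin n → ℕ) (j : Fin n) : ℕ :=
  ∑ k ∈ Finset.univ.filter (· < j), deg k

theorem prefixDegree_zero {n : ℕ} (deg : Fin (n + 1) → ℕ) : prefixDegree deg 0 = 0 := by
  simp [prefixDegree]

theorem prefixDegree_succ {n : ℕ} (deg : Fin (n + 1) → ℕ) (j : Fin n) :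
    prefixDegree deg j.succ = deg 0 + prefixDegree (Fin.tail deg) j := by
  simp only [prefixDegree, Finset.sum_filter, Fin.sum_univ_succ, Fin.succ_pos, if_true,
    Fin.succ_lt_succ_iff, Fin.tail]

end OrderedProducts

section Leibniz

variable {𝔄 : Type} [Ring 𝔄] [Algebra ℂ 𝔄] {gr : ℕ → ℕ → Submodule ℂ 𝔄} {R : 𝔄 →ₗ[ℂ] 𝔄}

theorem IsAntideriv.sub {S : 𝔄 →ₗ[ℂ] 𝔄} (hR : IsAntideriv gr R) (hS : IsAntideriv gr S) :
    IsAntideriv gr (R - S) := by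
  intro k l a ha c
  simp only [LinearMap.sub_apply, hR k l a ha c, hS k l a ha c, mul_sub, sub_mul, smul_sub]
  abel

theorem IsAntideriv.map_one (hR : IsAntideriv gr R) (h1 : (1 : 𝔄) ∈ gr 0 0) : R 1 = 0 := by
  simpa using hR 0 0 1 h1 1

theorem IsAntideriv.map_prodOfFn (hR : IsAntideriv gr R) (h1 : (1 : 𝔄) ∈ gr 0 0) {n : ℕ}
    (a : Fin n → 𝔄) (k l : Fin n → ℕ) (ha : ∀ j, a j ∈ gr (k j) (l j)) :
    R (prodOfFn a) =
      ∑ j, (-1 : ℂ) ^ prefixDegree (k + l) j • prodOfFn (update a j (R (a j))) := by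
  induction n with
  | zero => simpa [prodOfFn] using hR.map_one h1
  | succ n ih =>
    rw [prodOfFn_succ, hR _ _ _ (ha 0), ih (Fin.tail a) (Fin.tail k) (Fin.tail l)
      (fun j => ha j.succ), Fin.sum_univ_succ, prefixDegree_zero, pow_zero, one_smul,
      prodOfFn_succ (update a 0 _), update_self, Fin.tail_update_zero, Finset.mul_sum,
      Finset.smul_sum]
    congr 1
    refine Finset.sum_congr rfl fun j _ => ?_
    rw [prodOfFn_succ (update a j.succ _), update_of_ne (Fin.succ_ne_zero j).symm,
      Fin.tail_update_succ, mul_smul_comm, smul_smul, prefixDegree_succ, ← pow_add]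
    rfl

theorem prodOfFn_update_mul_left (hgr : IsBigradedCommAlg 𝔄 gr) {n : ℕ} (a : Fin n → 𝔄)
    (k l : Fin n → ℕ) (ha : ∀ j, a j ∈ gr (k j) (l j)) (j : Fin n) {u : 𝔄} (hu : u ∈ gr 1 0)
    (y : 𝔄) :
    prodOfFn (update a j (u * y)) =
      (-1 : ℂ) ^ prefixDegree (k + l) j • (u * prodOfFn (update a j y)) := by
  induction n with
  | zero => exact j.elim0
  | succ n ih =>
    cases j using Fin.cases with
    | zero =>
      rw [prefixDegree_zero, pow_zero, one_smul, prodOfFn_succ, prodOfFn_succ, update_self,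
        update_self, Fin.tail_update_zero, Fin.tail_update_zero, mul_assoc]
    | succ j =>
      rw [prodOfFn_succ, prodOfFn_succ (update a j.succ y),
        update_of_ne (Fin.succ_ne_zero j).symm, update_of_ne (Fin.succ_ne_zero j).symm,
        Fin.tail_update_succ, Fin.tail_update_succ,
        ih (Fin.tail a) (Fin.tail k) (Fin.tail l) (fun j => ha j.succ), mul_smul_comm,
        ← mul_assoc, hgr.2.2.1 _ _ 1 0 _ (ha 0) _ hu, smul_mul_assoc, mul_assoc, smul_smul,
        ← pow_add, prefixDegree_succ, add_zero, mul_one, add_comm]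
      rfl

theorem IsAntideriv.map_prodOfFn_of_eq_sum_mul (hgr : IsBigradedCommAlg 𝔄 gr)
    (hR : IsAntideriv gr R) {n : ℕ} (a : Fin n → 𝔄) (k l : Fin n → ℕ)
    (ha : ∀ j, a j ∈ gr (k j) (l j)) {κ : Type} [Fintype κ] (u : κ → 𝔄)
    (hu : ∀ p, u p ∈ gr 1 0) (y : Fin n → κ → 𝔄) (hy : ∀ j, R (a j) = ∑ p, u p * y j p) :
    R (prodOfFn a) = ∑ j, ∑ p, u p * prodOfFn (update a j (y j p)) := by
  rw [hR.map_prodOfFn hgr.1 a k l ha]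
  refine Finset.sum_congr rfl fun j _ => ?_
  rw [hy j, ← prodOfFnUpdate_apply, map_sum, Finset.smul_sum]
  refine Finset.sum_congr rfl fun p _ => ?_
  rw [prodOfFnUpdate_apply, prodOfFn_update_mul_left hgr a k l ha j (hu p), smul_smul,
    ← pow_add, Even.neg_one_pow ⟨_, rfl⟩, one_smul]

end Leibniz

section Invariance

variable {g : Type} [LieRing g] [LieAlgebra ℂ g] {ι : Type} [Fintype ι]

theorem MultilinearMap.sum_coord_mul_update_basis (b : Module.Basis ι ℂ g) {n : ℕ}
    (I : MultilinearMap ℂ (fun _ : Fin n => g) ℂ) (v : Fin n → g) (j : Fin n) (z : g) :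
    ∑ i, b.coord i z * I (update v j (b i)) = I (update v j z) := by
  conv_rhs => rw [← I.toLinearMap_apply, ← b.sum_repr z, _root_.map_sum]
  simp [Module.Basis.coord_apply]

theorem IsInvForm.sum_update_lie_left {n : ℕ} {I : MultilinearMap ℂ (fun _ : Fin n => g) ℂ}
    (hI : IsInvForm I) (v : Fin n → g) (X : g) : ∑ j, I (update v j ⁅X, v j⁆) = 0 := by
  simp_rw [← lie_skew X, ← neg_one_smul ℂ ⁅_, X⁆, I.map_update_smul, neg_one_smul,
    Finset.sum_neg_distrib, hI X v, neg_zero]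

theorem sum_sum_update_eq {M : Type} [AddCommMonoid M] [DecidableEq ι] {n : ℕ} (j : Fin n)
    (E : (Fin n → ι) → ι → M) :
    ∑ w, ∑ q, E w q = ∑ w, ∑ i, E (update w j i) (w j) := by
  have swap : Involutive fun x : (Fin n → ι) × ι => (update x.1 j x.2, x.1 j) := by
    intro x; simp
  simp only [← Fintype.sum_prod_type']
  exact (Equiv.sum_comp (swap.toPerm _) fun x => E x.1 x.2).symm

theorem sum_smul_update_eq_zero {M : Type} [AddCommMonoid M] [Module ℂ M] [DecidableEq ι]
    {n : ℕ} (t : (Fin n → ι) → ℂ) (c : ι → ι → ι → ℂ) (C : ι → (Fin n → ι) → M)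
    (h : ∀ p w, ∑ j, ∑ i, t (update w j i) * c i p (w j) = 0) :
    ∑ w, ∑ j, ∑ p, ∑ q, (t w * c (w j) p q) • C p (update w j q) = 0 := by
  have reindex : ∀ j p, ∑ w, ∑ q, (t w * c (w j) p q) • C p (update w j q) =
      ∑ w, (∑ i, t (update w j i) * c i p (w j)) • C p w := by
    intro j p
    rw [sum_sum_update_eq j]
    simp [Finset.sum_smul]
  calc ∑ w, ∑ j, ∑ p, ∑ q, (t w * c (w j) p q) • C p (update w j q)
      = ∑ j, ∑ p, ∑ w, ∑ q, (t w * c (w j) p q) • C p (update w j q) := by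
        rw [Finset.sum_comm]; exact Finset.sum_congr rfl fun j _ => Finset.sum_comm
    _ = ∑ p, ∑ w, (∑ j, ∑ i, t (update w j i) * c i p (w j)) • C p w := by
        simp_rw [reindex, Finset.sum_smul]; rw [Finset.sum_comm]
        exact Finset.sum_congr rfl fun p _ => Finset.sum_comm
    _ = 0 := by simp [h]

end Invariance

section Vanishing

variable {g : Type} [LieRing g] [LieAlgebra ℂ g] {ι : Type} [Fintype ι]
variable {𝔄 : Type} [Ring 𝔄] [Algebra ℂ 𝔄] {gr : ℕ → ℕ → Submodule ℂ 𝔄} {R : 𝔄 →ₗ[ℂ] 𝔄}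

theorem IsAntideriv.map_multiEval_eq_zero (hgr : IsBigradedCommAlg 𝔄 gr)
    (hR : IsAntideriv gr R) (b : Module.Basis ι ℂ g) {A : g ⊗[ℂ] 𝔄}
    (hA : A ∈ gvSub g (gr 1 0)) {n : ℕ} {I : MultilinearMap ℂ (fun _ : Fin n => g) ℂ}
    (hI : IsInvForm I) {Z : Fin n → g ⊗[ℂ] 𝔄} (hZ : ∀ j, ∃ k l, Z j ∈ gvSub g (gr k l))
    (hRZ : ∀ j, lTensor g R (Z j) = -gaBracket g 𝔄 A (Z j)) :
    R (multiEval b I Z) = 0 := by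
  classical
  choose k l hkl using hZ
  set a : (Fin n → ι) → Fin n → 𝔄 := fun w j => coordEv b (w j) (Z j)
  have update_a : ∀ w j q, update (a w) j (a (update w j q) j) = a (update w j q) := by
    intro w j q
    ext i
    rcases eq_or_ne i j with rfl | hij <;> simp [a, update_of_ne, *]
  have hRa : ∀ w j, R (a w j) =
      ∑ p, coordEv b p A * -∑ q, b.coord (w j) ⁅b p, b q⁆ • a (update w j q) j := by
    intro w j
    simp [a, ← coordEv_lTensor, hRZ, coordEv_gaBracket, Finset.mul_sum]
  have hRprod : ∀ w, R (prodOfFn (a w)) = -∑ j, ∑ p, ∑ q,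
      b.coord (w j) ⁅b p, b q⁆ • (coordEv b p A * prodOfFn (a (update w j q))) := by
    intro w
    rw [hR.map_prodOfFn_of_eq_sum_mul hgr (a w) k l
      (fun j => coordEv_mem_of_mem_gvSub b (hkl j) (w j)) _
      (fun p => coordEv_mem_of_mem_gvSub b hA p) _ (hRa w)]
    simp only [← prodOfFnUpdate_apply, map_neg, map_sum, map_smul]
    simp only [prodOfFnUpdate_apply, update_a, mul_neg, Finset.mul_sum, mul_smul_comm,
      Finset.sum_neg_distrib]
  -- the coefficient of `A^p * a w` is the invariance sum of `I` at `b ∘ w` and `b p`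
  have hinv : ∀ p w, ∑ j, ∑ i, I (fun m => b (update w j i m)) * b.coord i ⁅b p, b (w j)⁆ = 0 := by
    intro p w
    have hb : ∀ j i, (fun m => b (update w j i m)) = update (fun m => b (w m)) j (b i) :=
      fun j i => comp_update b w j i
    simp_rw [hb, mul_comm (I _), MultilinearMap.sum_coord_mul_update_basis]
    exact hI.sum_update_lie_left _ _
  have hexp : R (multiEval b I Z) = ∑ w, I (fun j => b (w j)) • R (prodOfFn (a w)) := by
    simp only [multiEval, map_sum, map_smul]; rfl
  rw [hexp]
  simp only [hRprod, smul_neg, Finset.smul_sum, smul_smul, Finset.sum_neg_distrib]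
  rw [sum_smul_update_eq_zero (fun w => I (fun j => b (w j))) (fun i p q => b.coord i ⁅b p, b q⁆)
    (fun p w => coordEv b p A * prodOfFn (a w)) hinv, neg_zero]

end Vanishing

namespace BigradedWeil

variable {g : Type} [LieRing g] [LieAlgebra ℂ g] {𝔄 : Type} [Ring 𝔄] [Algebra ℂ 𝔄]
variable (W : BigradedWeil g 𝔄)

theorem lTensor_d_mem {k l : ℕ} {Z : g ⊗[ℂ] 𝔄} (hZ : Z ∈ gvSub g (W.gr k l)) :
    lTensor g W.d Z ∈ gvSub g (W.gr (k + 1) l) :=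
  lTensor_mem_gvSub W.d (W.d_gr k l) hZ

theorem lTensor_δ_mem {k l : ℕ} {Z : g ⊗[ℂ] 𝔄} (hZ : Z ∈ gvSub g (W.gr k l)) :
    lTensor g W.δ Z ∈ gvSub g (W.gr k (l + 1)) :=
  lTensor_mem_gvSub W.δ (W.δ_gr k l) hZ

theorem lTensor_d_lTensor_d (Z : g ⊗[ℂ] 𝔄) : lTensor g W.d (lTensor g W.d Z) = 0 := by
  rw [← lTensor_comp_apply, show W.d ∘ₗ W.d = 0 from LinearMap.ext W.d_sq, lTensor_zero,
    LinearMap.zero_apply]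

theorem lTensor_d_lTensor_δ (Z : g ⊗[ℂ] 𝔄) :
    lTensor g W.d (lTensor g W.δ Z) = -lTensor g W.δ (lTensor g W.d Z) := by
  have anticomm : W.d ∘ₗ W.δ = -(W.δ ∘ₗ W.d) :=
    LinearMap.ext fun x => eq_neg_of_add_eq_zero_left (W.d_δ x)
  rw [← lTensor_comp_apply, ← lTensor_comp_apply, ← LinearMap.neg_apply, ← lTensor_neg, anticomm]

theorem gaBracket_F (V : g ⊗[ℂ] 𝔄) : gaBracket g 𝔄 W.F V =
    gaBracket g 𝔄 (lTensor g W.d W.A) V + (2⁻¹ : ℂ) • gaBracket g 𝔄 (gaBracket g 𝔄 W.A W.A) V := by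
  rw [W.eqF, map_add, map_smul, LinearMap.add_apply, LinearMap.smul_apply]

theorem gaBracket_ψ (V : g ⊗[ℂ] 𝔄) : gaBracket g 𝔄 W.ψ V =
    gaBracket g 𝔄 (lTensor g W.δ W.A) V + gaBracket g 𝔄 (lTensor g W.d W.α) V +
      gaBracket g 𝔄 (gaBracket g 𝔄 W.A W.α) V := by
  rw [W.eqψ, map_add, map_add, LinearMap.add_apply, LinearMap.add_apply]

theorem lTensor_d_F : lTensor g W.d W.F = -gaBracket g 𝔄 W.A W.F := by
  have dF : lTensor g W.d W.F = lTensor g W.d (lTensor g W.d W.A) +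
      (2⁻¹ : ℂ) • lTensor g W.d (gaBracket g 𝔄 W.A W.A) := by
    rw [W.eqF, map_add, map_smul]
  linear_combination (norm := module) dF + W.lTensor_d_lTensor_d W.A +
    (2⁻¹ : ℂ) • W.d_antideriv.lTensor_gaBracket W.A_mem W.A -
    (2⁻¹ : ℂ) • gaBracket_comm W.graded W.A_mem (W.lTensor_d_mem W.A_mem) - W.gaBracket_F W.A -
    (2⁻¹ : ℂ) • gaBracket_gaBracket_self_self W.graded W.A_mem +
    gaBracket_comm W.graded W.F_mem W.A_mem

theorem lTensor_d_ψ : lTensor g W.d W.ψ = -W.B - gaBracket g 𝔄 W.A W.ψ := by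
  have dψ : lTensor g W.d W.ψ = lTensor g W.d (lTensor g W.δ W.A) +
      lTensor g W.d (lTensor g W.d W.α) + lTensor g W.d (gaBracket g 𝔄 W.A W.α) := by
    rw [W.eqψ, map_add, map_add]
  have δF : lTensor g W.δ W.F = lTensor g W.δ (lTensor g W.d W.A) +
      (2⁻¹ : ℂ) • lTensor g W.δ (gaBracket g 𝔄 W.A W.A) := by
    rw [W.eqF, map_add, map_smul]
  linear_combination (norm := module) dψ + W.lTensor_d_lTensor_δ W.A + δF +
    (2⁻¹ : ℂ) • W.δ_antideriv.lTensor_gaBracket W.A_mem W.A -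
    (2⁻¹ : ℂ) • gaBracket_comm W.graded W.A_mem (W.lTensor_δ_mem W.A_mem) + W.eqB +
    W.lTensor_d_lTensor_d W.α + W.d_antideriv.lTensor_gaBracket W.A_mem W.α - W.gaBracket_F W.α -
    gaBracket_comm W.graded W.A_mem (W.lTensor_d_mem W.α_mem) - W.gaBracket_ψ W.A -
    gaBracket_gaBracket_self_right W.graded W.A_mem W.α_mem +
    gaBracket_comm W.graded W.ψ_mem W.A_mem + gaBracket_comm W.graded W.α_mem W.F_mem

theorem lTensor_d_B : lTensor g W.d W.B = -gaBracket g 𝔄 W.A W.B - gaBracket g 𝔄 W.F W.ψ := by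
  have dB : lTensor g W.d W.B =
      lTensor g W.d (lTensor g W.δ W.F) + lTensor g W.d (gaBracket g 𝔄 W.α W.F) := by
    rw [W.eqB, map_add]
  have δdF : lTensor g W.δ (lTensor g W.d W.F) = -lTensor g W.δ (gaBracket g 𝔄 W.A W.F) := by
    rw [W.lTensor_d_F, map_neg]
  have bracket_dF : gaBracket g 𝔄 W.α (lTensor g W.d W.F) =
      -gaBracket g 𝔄 W.α (gaBracket g 𝔄 W.A W.F) := by
    rw [W.lTensor_d_F, map_neg]
  have bracket_B : gaBracket g 𝔄 W.A W.B =
      gaBracket g 𝔄 W.A (lTensor g W.δ W.F) + gaBracket g 𝔄 W.A (gaBracket g 𝔄 W.α W.F) := by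
    rw [W.eqB, map_add]
  linear_combination (norm := module) dB + W.lTensor_d_lTensor_δ W.F - δdF +
    W.δ_antideriv.lTensor_gaBracket W.A_mem W.F + bracket_B +
    W.d_antideriv.lTensor_gaBracket W.α_mem W.F - bracket_dF - W.gaBracket_ψ W.F +
    gaBracket_jacobi W.graded W.A_mem W.α_mem W.F + gaBracket_comm W.graded W.ψ_mem W.F_mem

theorem lTensor_d_φ : lTensor g W.d W.φ = W.β - gaBracket g 𝔄 W.A W.φ := by
  rw [W.eqβ]; abel

theorem lTensor_d_β : lTensor g W.d W.β = gaBracket g 𝔄 W.F W.φ - gaBracket g 𝔄 W.A W.β := by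
  have dβ : lTensor g W.d W.β =
      lTensor g W.d (lTensor g W.d W.φ) + lTensor g W.d (gaBracket g 𝔄 W.A W.φ) := by
    rw [W.eqβ, map_add]
  have bracket_β : gaBracket g 𝔄 W.A W.β =
      gaBracket g 𝔄 W.A (lTensor g W.d W.φ) + gaBracket g 𝔄 W.A (gaBracket g 𝔄 W.A W.φ) := by
    rw [W.eqβ, map_add]
  linear_combination (norm := module) dβ + W.lTensor_d_lTensor_d W.φ +
    W.d_antideriv.lTensor_gaBracket W.A_mem W.φ - W.gaBracket_F W.φ + bracket_β +
    gaBracket_self_gaBracket W.graded W.A_mem W.φ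

end BigradedWeil

theorem stmt_9_general (g : Type) [LieRing g] [LieAlgebra ℂ g]
    {ι : Type} [Fintype ι] (b : Module.Basis ι ℂ g)
    (𝔄 : Type) [Ring 𝔄] [Algebra ℂ 𝔄] (W : BigradedWeil g 𝔄)
    (d₁ d₂ : 𝔄 →ₗ[ℂ] 𝔄)
    (h₁ : IsAntideriv W.gr d₁) (h₂ : IsAntideriv W.gr d₂)
    (h₁ψ : LinearMap.lTensor g d₁ W.ψ = -W.B)
    (h₁φ : LinearMap.lTensor g d₁ W.φ = W.β)
    (h₁F : LinearMap.lTensor g d₁ W.F = 0)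
    (h₁B : LinearMap.lTensor g d₁ W.B = 0) (h₁β : LinearMap.lTensor g d₁ W.β = 0)
    (h₂B : LinearMap.lTensor g d₂ W.B = -(gaBracket g 𝔄 W.F W.ψ))
    (h₂β : LinearMap.lTensor g d₂ W.β = gaBracket g 𝔄 W.F W.φ)
    (h₂F : LinearMap.lTensor g d₂ W.F = 0) (h₂φ : LinearMap.lTensor g d₂ W.φ = 0)
    (h₂ψ : LinearMap.lTensor g d₂ W.ψ = 0) :
    ∀ x ∈ baseB b W, W.d x = d₁ x + d₂ x := by
  have hR : IsAntideriv W.gr (W.d - d₁ - d₂) := (W.d_antideriv.sub h₁).sub h₂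
  have hdeg : ∀ m, ∃ k l, W.genOf m ∈ gvSub g (W.gr k l) := by
    intro m
    fin_cases m
    exacts [⟨_, _, W.F_mem⟩, ⟨_, _, W.ψ_mem⟩, ⟨_, _, W.φ_mem⟩, ⟨_, _, W.B_mem⟩, ⟨_, _, W.β_mem⟩]
  have hgen : ∀ m, lTensor g (W.d - d₁ - d₂) (W.genOf m) = -gaBracket g 𝔄 W.A (W.genOf m) := by
    intro m
    fin_cases m <;>
    simp [BigradedWeil.genOf, lTensor_sub, W.lTensor_d_F, W.lTensor_d_ψ, W.lTensor_d_φ,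
      W.lTensor_d_B, W.lTensor_d_β, h₁F, h₁ψ, h₁φ, h₁B, h₁β, h₂F, h₂ψ, h₂φ, h₂B, h₂β]
    abel
  have hker : baseB b W ≤ ker (W.d - d₁ - d₂) := Submodule.span_le.mpr <| by
    rintro _ ⟨n, I, c, hI, rfl⟩
    exact hR.map_multiEval_eq_zero W.graded b W.A_mem hI (fun j => hdeg (c j)) fun j => hgen (c j)
  intro x hx
  simpa [sub_sub, sub_eq_zero] using hker hx

/-- Lemma 2.1: if `d₁`, `d₂` are the antiderivations with
`d₁ψ = −B`, `d₁φ = β`, `d₂B = −[F,ψ]`, `d₂β = [F,φ]` and vanishing on the other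
generators, then `d` coincides with `d₁ + d₂` on the base `ℬ(g)`. -/
theorem stmt_9 (g : Type) [LieRing g] [LieAlgebra ℂ g] [FiniteDimensional ℂ g]
    {ι : Type} [Fintype ι] (b : Module.Basis ι ℂ g)
    (𝔄 : Type) [Ring 𝔄] [Algebra ℂ 𝔄] (W : BigradedWeil g 𝔄)
    (d₁ d₂ : 𝔄 →ₗ[ℂ] 𝔄)
    (h₁ : IsAntideriv W.gr d₁) (h₂ : IsAntideriv W.gr d₂)
    (h₁ψ : LinearMap.lTensor g d₁ W.ψ = -W.B)
    (h₁φ : LinearMap.lTensor g d₁ W.φ = W.β)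
    (h₁A : LinearMap.lTensor g d₁ W.A = 0) (h₁α : LinearMap.lTensor g d₁ W.α = 0)
    (h₁F : LinearMap.lTensor g d₁ W.F = 0) (h₁ξ : LinearMap.lTensor g d₁ W.ξ = 0)
    (h₁B : LinearMap.lTensor g d₁ W.B = 0) (h₁β : LinearMap.lTensor g d₁ W.β = 0)
    (h₂B : LinearMap.lTensor g d₂ W.B = -(gaBracket g 𝔄 W.F W.ψ))
    (h₂β : LinearMap.lTensor g d₂ W.β = gaBracket g 𝔄 W.F W.φ)
    (h₂A : LinearMap.lTensor g d₂ W.A = 0) (h₂α : LinearMap.lTensor g d₂ W.α = 0)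
    (h₂F : LinearMap.lTensor g d₂ W.F = 0) (h₂φ : LinearMap.lTensor g d₂ W.φ = 0)
    (h₂ψ : LinearMap.lTensor g d₂ W.ψ = 0) (h₂ξ : LinearMap.lTensor g d₂ W.ξ = 0) :
    ∀ x ∈ baseB b W, W.d x = d₁ x + d₂ x :=
  stmt_9_general g b 𝔄 W d₁ d₂ h₁ h₂ h₁ψ h₁φ h₁F h₁B h₁β h₂B h₂β h₂F h₂φ h₂ψ
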